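/- arXiv:2007.11707 — 2 statements merged into one kernel-verified Lean document; each statement's English description precedes it below -/
import Mathlib

section
/- For each m ∈ [k] and j ∈ [N], the variance of â_j = (N/k)·((e^ε+2^k-1)/(e^ε-1))·sum_{m=1}^k q̃_m·1{j = s_m} satisfies Var(â_j) ≤ C·((e^ε+2^k-1)/(e^ε-1))^2·(1/N + 1/k), where |q̃_m| = c/√d almost surely, s_1,...,s_k i.i.d. uniform on [N], and N = Θ(d). -/
/-!
Bound the variance by the second moment. Since `|q̃_m| = c/√d`, the sum `∑ q̃_m 1{s_m = j}` is at
most `(c/√d) B` in absolute value, where `B = #{m | s_m = j}` is Binomial(k, 1/N). Expanding `B²`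
as a double sum of indicators of `{s_m = j} ∩ {s_m' = j}`, the diagonal contributes `k/N` and, by
pairwise independence, the off-diagonal at most `k²/N²`. After the factor `(N/k)²` this is
`(c²/d)(N/k + 1)`, and `N ≤ c'd` turns it into `c²c' (1/N + 1/k)`.
-/

open MeasureTheory ProbabilityTheory
open scoped ENNReal

lemma sq_sum_indicator_one {ι Ω : Type*} [Fintype ι] (E : ι → Set Ω) (ω : Ω) :
    (∑ i, (E i).indicator (1 : Ω → ℝ) ω) ^ 2 =
      ∑ i, ∑ i', (E i ∩ E i').indicator (1 : Ω → ℝ) ω := by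
  simp only [sq, Finset.sum_mul_sum, Set.inter_indicator_one, Pi.mul_apply]

section IndicatorSum

variable {ι Ω : Type*} [Fintype ι] [MeasurableSpace Ω] {μ : Measure Ω} {E : ι → Set Ω}

lemma integrable_sq_sum_indicator_one [IsFiniteMeasure μ] (hE : ∀ i, MeasurableSet (E i)) :
    Integrable (fun ω => (∑ i, (E i).indicator (1 : Ω → ℝ) ω) ^ 2) μ := by
  simp_rw [sq_sum_indicator_one]
  exact integrable_finsetSum _ fun i _ => integrable_finsetSum _ fun i' _ =>
    (integrable_const 1).indicator ((hE i).inter (hE i'))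

lemma integral_sq_sum_indicator_one [IsFiniteMeasure μ] (hE : ∀ i, MeasurableSet (E i)) :
    ∫ ω, (∑ i, (E i).indicator (1 : Ω → ℝ) ω) ^ 2 ∂μ = ∑ i, ∑ i', μ.real (E i ∩ E i') := by
  simp_rw [sq_sum_indicator_one]
  rw [integral_finsetSum _ fun i _ => integrable_finsetSum _ fun i' _ =>
    (integrable_const 1).indicator ((hE i).inter (hE i'))]
  refine Finset.sum_congr rfl fun i _ => ?_
  rw [integral_finsetSum _ fun i' _ => (integrable_const 1).indicator ((hE i).inter (hE i'))]
  exact Finset.sum_congr rfl fun i' _ => integral_indicator_one ((hE i).inter (hE i'))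

lemma integral_sq_sum_indicator_one_le [IsProbabilityMeasure μ] {p : ℝ}
    (hE : ∀ i, MeasurableSet (E i)) (hp : ∀ i, μ.real (E i) = p)
    (hindep : Pairwise fun i i' => IndepSet (E i) (E i') μ) :
    ∫ ω, (∑ i, (E i).indicator (1 : Ω → ℝ) ω) ^ 2 ∂μ ≤
      Fintype.card ι * p + Fintype.card ι ^ 2 * p ^ 2 := by
  classical
  have hterm : ∀ i i', μ.real (E i ∩ E i') ≤ (if i = i' then p else 0) + p ^ 2 := by
    intro i i'
    by_cases h : i = i'
    · subst h
      simpa [hp] using sq_nonneg p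
    · rw [if_neg h, zero_add, measureReal_def, (hindep h).measure_inter_eq_mul,
        ENNReal.toReal_mul, ← measureReal_def, ← measureReal_def, hp, hp, sq]
  calc ∫ ω, (∑ i, (E i).indicator (1 : Ω → ℝ) ω) ^ 2 ∂μ
      = ∑ i, ∑ i', μ.real (E i ∩ E i') := integral_sq_sum_indicator_one hE
    _ ≤ ∑ i : ι, ∑ i' : ι, ((if i = i' then p else 0) + p ^ 2) :=
      Finset.sum_le_sum fun i _ => Finset.sum_le_sum fun i' _ => hterm i i'
    _ = Fintype.card ι * p + Fintype.card ι ^ 2 * p ^ 2 := by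
      simp [Finset.sum_add_distrib]
      ring

end IndicatorSum

lemma sq_sum_mul_le_of_abs_le {ι : Type*} (s : Finset ι) {q w : ι → ℝ} {a : ℝ}
    (hq : ∀ i ∈ s, |q i| ≤ a) (hw : ∀ i ∈ s, 0 ≤ w i) :
    (∑ i ∈ s, q i * w i) ^ 2 ≤ a ^ 2 * (∑ i ∈ s, w i) ^ 2 := by
  have habs : |∑ i ∈ s, q i * w i| ≤ a * ∑ i ∈ s, w i := by
    calc |∑ i ∈ s, q i * w i| ≤ ∑ i ∈ s, |q i| * w i := by
          refine (Finset.abs_sum_le_sum_abs _ _).trans_eq (Finset.sum_congr rfl fun i hi => ?_)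
          rw [abs_mul, abs_of_nonneg (hw i hi)]
      _ ≤ ∑ i ∈ s, a * w i :=
          Finset.sum_le_sum fun i hi => mul_le_mul_of_nonneg_right (hq i hi) (hw i hi)
      _ = a * ∑ i ∈ s, w i := (Finset.mul_sum _ _ _).symm
  rw [← mul_pow, ← sq_abs]
  exact pow_le_pow_left₀ (abs_nonneg _) habs 2

lemma variance_sum_mul_indicator_le {ι Ω : Type*} [Fintype ι] [MeasurableSpace Ω]
    {μ : Measure Ω} [IsProbabilityMeasure μ] {q : ι → Ω → ℝ} {E : ι → Set Ω} {a p : ℝ}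
    (hq : ∀ i, AEStronglyMeasurable (q i) μ) (hqa : ∀ i ω, |q i ω| ≤ a)
    (hE : ∀ i, MeasurableSet (E i)) (hp : ∀ i, μ.real (E i) = p)
    (hindep : Pairwise fun i i' => IndepSet (E i) (E i') μ) :
    variance (fun ω => ∑ i, q i ω * (E i).indicator 1 ω) μ ≤
      a ^ 2 * (Fintype.card ι * p + Fintype.card ι ^ 2 * p ^ 2) := by
  have hmeas : AEStronglyMeasurable (fun ω => ∑ i, q i ω * (E i).indicator 1 ω) μ :=
    Finset.aestronglyMeasurable_fun_sum _ fun i _ =>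
      (hq i).mul ((aestronglyMeasurable_const).indicator (hE i))
  calc variance (fun ω => ∑ i, q i ω * (E i).indicator 1 ω) μ
      ≤ ∫ ω, (∑ i, q i ω * (E i).indicator 1 ω) ^ 2 ∂μ := variance_le_expectation_sq hmeas
    _ ≤ ∫ ω, a ^ 2 * (∑ i, (E i).indicator (1 : Ω → ℝ) ω) ^ 2 ∂μ := by
      refine integral_mono_of_nonneg (.of_forall fun ω => sq_nonneg _)
        ((integrable_sq_sum_indicator_one hE).const_mul _) (.of_forall fun ω => ?_)
      exact sq_sum_mul_le_of_abs_le _ (fun i _ => hqa i ω)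
        (fun i _ => Set.indicator_nonneg (fun _ _ => zero_le_one) ω)
    _ ≤ a ^ 2 * (Fintype.card ι * p + Fintype.card ι ^ 2 * p ^ 2) := by
      rw [integral_const_mul]
      exact mul_le_mul_of_nonneg_left (integral_sq_sum_indicator_one_le hE hp hindep)
        (sq_nonneg a)

lemma sqkr_scaled_second_moment_le {c c' d N k : ℝ} (hd : 0 < d) (hN : 0 < N) (hk : 0 < k)
    (hNd : N ≤ c' * d) :
    (N / k) ^ 2 * ((c / √d) ^ 2 * (k * N⁻¹ + k ^ 2 * N⁻¹ ^ 2)) ≤ c ^ 2 * c' * (1 / N + 1 / k) := by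
  have hexpand : (N / k) ^ 2 * ((c / √d) ^ 2 * (k * N⁻¹ + k ^ 2 * N⁻¹ ^ 2)) =
      c ^ 2 * (N / d) * (1 / N) + c ^ 2 * (N / d) * (1 / k) := by
    rw [div_pow c, Real.sq_sqrt hd.le]
    field_simp
    ring
  have hratio : N / d ≤ c' := (div_le_iff₀ hd).mpr hNd
  rw [hexpand, mul_add]
  have hc2 : 0 ≤ c ^ 2 := sq_nonneg c
  gcongr

/-- In the SQKR scheme (`|qt m| = c/√d` a.s., `s 1, …, s k` i.i.d. uniform on
`[N]`, `N = Θ(d)`), the variance of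
`â j = (N/k) · ((e^ε+2^k-1)/(e^ε-1)) · ∑ m, qt m · 1{j = s m}` satisfies
`Var(â j) ≤ C · ((e^ε+2^k-1)/(e^ε-1))² · (1/N + 1/k)` for a constant `C` depending only on
the Kashin constants `c, c'`. -/
theorem sqkr_coefficient_variance (c c' : ℝ) (hc : 0 < c) (hc' : 1 ≤ c') :
    ∃ C > 0, ∀ (Ω : Type) [MeasureSpace Ω] [IsProbabilityMeasure (volume : Measure Ω)]
      (d N k : ℕ), 1 ≤ d → 1 ≤ k → (d : ℝ) ≤ N → (N : ℝ) ≤ c' * d →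
      ∀ ε : ℝ, 0 < ε →
      ∀ (s : Fin k → Ω → Fin N) (qt : Fin k → Ω → ℝ),
        (∀ m, Measurable (s m)) → (∀ m, Measurable (qt m)) →
        (∀ m ω, |qt m ω| = c / Real.sqrt d) →
        iIndepFun s volume →
        (∀ (m : Fin k) (i : Fin N), volume {ω | s m ω = i} = ((N : ℝ≥0∞))⁻¹) →
      ∀ j : Fin N,
        variance (fun ω => ((N : ℝ) / k) * ((Real.exp ε + 2 ^ k - 1) / (Real.exp ε - 1)) *
            ∑ m, qt m ω * (if s m ω = j then 1 else 0)) volume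
          ≤ C * ((Real.exp ε + 2 ^ k - 1) / (Real.exp ε - 1)) ^ 2 * (1 / N + 1 / k) := by
  refine ⟨c ^ 2 * c', by positivity, ?_⟩
  intro Ω _ _ d N k hd hk hdN hNd ε _ s qt hs hqt hqt_abs hindep hunif j
  set A := (Real.exp ε + 2 ^ k - 1) / (Real.exp ε - 1)
  have hd0 : (0 : ℝ) < d := by exact_mod_cast hd
  have hk0 : (0 : ℝ) < k := by exact_mod_cast hk
  have hE : ∀ m, MeasurableSet (s m ⁻¹' {j}) := fun m => hs m (MeasurableSet.singleton j)
  have hp : ∀ m, volume.real (s m ⁻¹' {j}) = (N : ℝ)⁻¹ := fun m => by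
    simp [measureReal_def, Set.preimage, hunif m j]
  have hpair : Pairwise fun m m' => IndepSet (s m ⁻¹' {j}) (s m' ⁻¹' {j}) volume :=
    fun m m' h => (indepFun_iff_indepSet_preimage (hs m) (hs m')).mp (hindep.indepFun h) _ _
      (MeasurableSet.singleton j) (MeasurableSet.singleton j)
  have hvar := variance_sum_mul_indicator_le (fun m => (hqt m).aestronglyMeasurable)
    (fun m ω => (hqt_abs m ω).le) hE hp hpair
  have hindicator : (fun ω => ∑ m, qt m ω * (s m ⁻¹' {j}).indicator 1 ω) =
      fun ω => ∑ m, qt m ω * if s m ω = j then 1 else 0 := by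
    funext ω
    refine Finset.sum_congr rfl fun m _ => ?_
    by_cases h : s m ω = j <;> simp [h]
  rw [hindicator, Fintype.card_fin] at hvar
  rw [variance_const_mul, mul_pow]
  calc _ ≤ (N / k : ℝ) ^ 2 * A ^ 2 * ((c / √d) ^ 2 * (k * (N : ℝ)⁻¹ + k ^ 2 * (N : ℝ)⁻¹ ^ 2)) := by
        gcongr
    _ = (N / k : ℝ) ^ 2 * ((c / √d) ^ 2 * (k * (N : ℝ)⁻¹ + k ^ 2 * (N : ℝ)⁻¹ ^ 2)) * A ^ 2 := by
        ring
    _ ≤ c ^ 2 * c' * (1 / N + 1 / k) * A ^ 2 :=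
        mul_le_mul_of_nonneg_right
          (sqkr_scaled_second_moment_le hd0 (hd0.trans_le hdN) hk0 hNd) (sq_nonneg A)
    _ = c ^ 2 * c' * A ^ 2 * (1 / N + 1 / k) := by ring
end

section
/- In the RHR scheme, the estimator Ŷ_i defined by Ŷ_i(r') = (1/2^{k-1})·(H_{2^{k-1}})_{m'}·((e^ε+2^k-1)/(e^ε-1))·Q̃_i if r' ≡ r_i (mod B) (with r' = (m'-1)B + r_i) and Ŷ_i(r') = 0 otherwise, is an unbiased estimator of (1/d) H_d X_i, where the expectation is over the uniform index r_i ∈ [B] and the 2^k-randomized response producing Q̃_i. -/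
open MeasureTheory
open scoped ENNReal

/-!
On the event `r = r₀` the estimator is linear in `Q̃`, so its mean at `j' = e (m', r₀)` is
`(λ / 2^(k-1)) ∑ₗ (H_{2^(k-1)})_{m' l} E[Q̃ₗ; r = r₀]`, which the randomized-response hypothesis
turns into `(1/d) ∑ₗ ∑ₜ (H_{2^(k-1)})_{m' l} (H_B)_{r₀ t} X_{e (l, t)}`. The Sylvester matrix is a
Kronecker product, `H_{2^(a+b)} = H_{2^a} ⊗ H_{2^b}` under the index split `i = i₂ + 2^b i₁` that
`e` realises, so this double sum is row `j'` of `(1/d) H_d X`.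
-/

/-- The Sylvester-type Walsh–Hadamard matrix `H_{2^m}`. -/
def Hadamard : (m : ℕ) → Matrix (Fin (2 ^ m)) (Fin (2 ^ m)) ℝ
  | 0 => fun _ _ => 1
  | m + 1 =>
    Matrix.reindex
      (finSumFinEquiv.trans (finCongr (by ring : 2 ^ m + 2 ^ m = 2 ^ (m + 1))))
      (finSumFinEquiv.trans (finCongr (by ring : 2 ^ m + 2 ^ m = 2 ^ (m + 1))))
      (Matrix.fromBlocks (Hadamard m) (Hadamard m) (Hadamard m) (-(Hadamard m)))

-- `Hadamard` with natural-number indices, so that the Kronecker identity avoids casts between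
-- `Fin (2 ^ (a + b))` and `Fin (2 ^ n)`.
def hadamardEntry : ℕ → ℕ → ℕ → ℝ
  | 0, _, _ => 1
  | m + 1, i, j =>
      (if 2 ^ m ≤ i ∧ 2 ^ m ≤ j then -1 else 1) * hadamardEntry m (i % 2 ^ m) (j % 2 ^ m)

lemma finSumFinEquiv_symm_apply_eq_dite {m n : ℕ} (x : Fin (m + n)) :
    finSumFinEquiv.symm x =
      if h : (x : ℕ) < m then Sum.inl ⟨x, h⟩ else Sum.inr ⟨x - m, by omega⟩ := by
  split_ifs with h
  · rw [Equiv.symm_apply_eq]; ext; simp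
  · rw [Equiv.symm_apply_eq]; ext; simp; omega

lemma hadamard_apply (m : ℕ) (i j : Fin (2 ^ m)) : Hadamard m i j = hadamardEntry m i j := by
  induction m with
  | zero => simp [Hadamard, hadamardEntry]
  | succ m ih =>
    have hi : (i : ℕ) < 2 ^ m + 2 ^ m := by have := i.isLt; omega
    have hj : (j : ℕ) < 2 ^ m + 2 ^ m := by have := j.isLt; omega
    simp only [Hadamard, Matrix.reindex_apply, Matrix.submatrix_apply, Equiv.symm_trans_apply,
      finCongr_symm, finCongr_apply, finSumFinEquiv_symm_apply_eq_dite, Fin.val_cast, hadamardEntry]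
    have hmod : ∀ x < 2 ^ m + 2 ^ m, x % 2 ^ m = if x < 2 ^ m then x else x - 2 ^ m := by
      intro x hx
      split_ifs with h
      · exact Nat.mod_eq_of_lt h
      · rw [Nat.mod_eq_sub_mod (by omega), Nat.mod_eq_of_lt (by omega)]
    rw [hmod i hi, hmod j hj]
    split_ifs <;> simp [ih] <;> omega

lemma Nat.add_mul_mod_mul {x c y n : ℕ} (hx : x < c) :
    (x + c * y) % (c * n) = x + c * (y % n) := by
  have hc : 0 < c := by omega
  rw [Nat.mod_mul, Nat.add_mul_mod_self_left, Nat.mod_eq_of_lt hx, Nat.add_mul_div_left _ _ hc,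
    Nat.div_eq_of_lt hx, zero_add]

lemma Nat.mul_le_add_mul_iff {x c y n : ℕ} (hx : x < c) : c * n ≤ x + c * y ↔ n ≤ y := by
  have hc : 0 < c := by omega
  rw [mul_comm, ← Nat.le_div_iff_mul_le hc, Nat.add_mul_div_left _ _ hc, Nat.div_eq_of_lt hx,
    zero_add]

lemma hadamardEntry_add (a b : ℕ) {i₁ j₁ i₂ j₂ : ℕ} (hi₁ : i₁ < 2 ^ a) (hj₁ : j₁ < 2 ^ a)
    (hi₂ : i₂ < 2 ^ b) (hj₂ : j₂ < 2 ^ b) :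
    hadamardEntry (a + b) (i₂ + 2 ^ b * i₁) (j₂ + 2 ^ b * j₁) =
      hadamardEntry a i₁ j₁ * hadamardEntry b i₂ j₂ := by
  induction a generalizing i₁ j₁ with
  | zero =>
    obtain rfl : i₁ = 0 := by simpa using hi₁
    obtain rfl : j₁ = 0 := by simpa using hj₁
    simp [hadamardEntry]
  | succ a ih =>
    have hpow : 2 ^ (a + b) = 2 ^ b * 2 ^ a := by rw [pow_add, mul_comm]
    have hsplit : a + 1 + b = a + b + 1 := by omega
    rw [hsplit, hadamardEntry, hadamardEntry, hpow, Nat.add_mul_mod_mul hi₂,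
      Nat.add_mul_mod_mul hj₂, ih (Nat.mod_lt _ (by positivity)) (Nat.mod_lt _ (by positivity)),
      ← mul_assoc]
    simp only [Nat.mul_le_add_mul_iff hi₂, Nat.mul_le_add_mul_iff hj₂]

lemma hadamard_apply_eq_mul {a b n : ℕ} (hn : a + b = n) {i j : Fin (2 ^ n)}
    {i₁ j₁ : Fin (2 ^ a)} {i₂ j₂ : Fin (2 ^ b)}
    (hi : (i : ℕ) = i₂ + 2 ^ b * i₁) (hj : (j : ℕ) = j₂ + 2 ^ b * j₁) :
    Hadamard n i j = Hadamard a i₁ j₁ * Hadamard b i₂ j₂ := by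
  subst hn
  rw [hadamard_apply, hadamard_apply, hadamard_apply, hi, hj]
  exact hadamardEntry_add a b i₁.isLt j₁.isLt i₂.isLt j₂.isLt

lemma integral_ite_eq_sum_mul {Ω α ι : Type*} [MeasurableSpace Ω] {μ : Measure Ω}
    [MeasurableSpace α] [MeasurableSingletonClass α] [DecidableEq α] [Fintype ι]
    {r : Ω → α} (hr : Measurable r) (a₀ : α) {Q : Ω → ι → ℝ}
    (hQ : ∀ i, Integrable (fun ω => Q ω i) μ) (b : ℝ) (c : ι → ℝ) :
    ∫ ω, (if a₀ = r ω then b * ∑ i, c i * Q ω i else 0) ∂μ =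
      b * ∑ i, c i * ∫ ω, (if r ω = a₀ then Q ω i else 0) ∂μ := by
  have hint : ∀ i, Integrable (fun ω => if r ω = a₀ then Q ω i else 0) μ := fun i =>
    ((hQ i).indicator (hr (measurableSet_singleton a₀))).congr
      (ae_of_all _ fun ω => by by_cases h : r ω = a₀ <;> simp [h])
  simp_rw [eq_comm (a := a₀), Finset.mul_sum, Finset.ite_sum_zero, ← mul_ite_zero]
  rw [integral_finsetSum _ fun i _ => ((hint i).const_mul (c i)).const_mul b]
  simp_rw [integral_const_mul]

theorem rhr_estimator_unbiased_general
    {Ω : Type*} [MeasureSpace Ω]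
    (mm k : ℕ) (hkm : k ≤ mm) (ε : ℝ) (hε : 0 < ε)
    (e : Fin (2 ^ (k - 1)) × Fin (2 ^ (mm - (k - 1))) ≃ Fin (2 ^ mm))
    (he : ∀ p : Fin (2 ^ (k - 1)) × Fin (2 ^ (mm - (k - 1))),
      ((e p : Fin (2 ^ mm)) : ℕ) = (p.2 : ℕ) + 2 ^ (mm - (k - 1)) * (p.1 : ℕ))
    (X : Fin (2 ^ mm) → ℝ)
    (r : Ω → Fin (2 ^ (mm - (k - 1)))) (hr : Measurable r)
    (Qt : Ω → Fin (2 ^ (k - 1)) → ℝ)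
    (hQint : ∀ l, Integrable fun ω => Qt ω l)
    (hQcond : ∀ (r₀ : Fin (2 ^ (mm - (k - 1)))) (l : Fin (2 ^ (k - 1))),
      (∫ ω, (if r ω = r₀ then Qt ω l else 0))
        = ((Real.exp ε - 1) / (Real.exp ε + 2 ^ k - 1)) *
            (∑ t, Hadamard (mm - (k - 1)) r₀ t * X (e (l, t))) / (2 ^ (mm - (k - 1)) : ℕ))
    (Yhat : Ω → Fin (2 ^ mm) → ℝ)
    (hYhat : ∀ ω j', Yhat ω j' =
      if (e.symm j').2 = r ω then
        (1 / (2 ^ (k - 1) : ℝ)) * ((Real.exp ε + 2 ^ k - 1) / (Real.exp ε - 1)) *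
          ∑ l, Hadamard (k - 1) (e.symm j').1 l * Qt ω l
      else 0) :
    ∀ j' : Fin (2 ^ mm),
      (∫ ω, Yhat ω j') = (1 / (2 ^ mm : ℝ)) * ∑ t, Hadamard mm j' t * X t := by
  intro j'
  obtain ⟨⟨i, r₀⟩, rfl⟩ := e.surjective j'
  have hdim : k - 1 + (mm - (k - 1)) = mm := by omega
  have hscale : 1 / (2 ^ (k - 1) : ℝ) * ((Real.exp ε + 2 ^ k - 1) / (Real.exp ε - 1)) *
      ((Real.exp ε - 1) / (Real.exp ε + 2 ^ k - 1)) / ((2 ^ (mm - (k - 1)) : ℕ) : ℝ) =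
      1 / 2 ^ mm := by
    have h1 : Real.exp ε - 1 ≠ 0 := by linarith [Real.add_one_lt_exp hε.ne']
    have h2 : Real.exp ε + 2 ^ k - 1 ≠ 0 := by
      linarith [Real.add_one_lt_exp hε.ne', one_le_pow₀ (M₀ := ℝ) one_le_two (n := k)]
    rw [show (2 : ℝ) ^ mm = 2 ^ (k - 1) * 2 ^ (mm - (k - 1)) by rw [← pow_add, hdim]]
    field_simp
    push_cast
    ring
  have hH : ∀ l t, Hadamard mm (e (i, r₀)) (e (l, t)) =
      Hadamard (k - 1) i l * Hadamard (mm - (k - 1)) r₀ t := fun l t =>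
    hadamard_apply_eq_mul hdim (he (i, r₀)) (he (l, t))
  simp only [hYhat, Equiv.symm_apply_apply]
  rw [integral_ite_eq_sum_mul hr r₀ hQint, ← e.sum_comp, Fintype.sum_prod_type, Finset.mul_sum,
    Finset.mul_sum _ _ (1 / 2 ^ mm : ℝ)]
  refine Finset.sum_congr rfl fun l _ => ?_
  simp only [hQcond, hH, mul_assoc]
  rw [← Finset.mul_sum, ← hscale]
  ring

/-- In the RHR scheme with `d = 2^mm`, `B = d/2^(k-1)`, one-hot data `X`,
uniform public index `r`, and `2^k`-randomized-response output `Q̃` satisfying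
`E[Q̃ | r = r₀] · ℙ(r = r₀) = ((e^ε-1)/(e^ε+2^k-1)) · Q(X, r₀) / B` where
`Q(X, r₀) l = (H_B)_{r₀} · X^{(l)}`, the estimator `Ŷ` defined by
`Ŷ(j') = (1/2^(k-1)) · λ · (H_{2^(k-1)})_{m'} · Q̃` when `j' = e (m', r)` and `0` otherwise
(with `λ = (e^ε+2^k-1)/(e^ε-1)`) is an unbiased estimator of `(1/d) H_d X`. -/
theorem rhr_estimator_unbiased
    {Ω : Type*} [MeasureSpace Ω] [IsProbabilityMeasure (volume : Measure Ω)]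
    (mm k : ℕ) (hk : 1 ≤ k) (hkm : k ≤ mm) (ε : ℝ) (hε : 0 < ε)
    (e : Fin (2 ^ (k - 1)) × Fin (2 ^ (mm - (k - 1))) ≃ Fin (2 ^ mm))
    (he : ∀ p : Fin (2 ^ (k - 1)) × Fin (2 ^ (mm - (k - 1))),
      ((e p : Fin (2 ^ mm)) : ℕ) = (p.2 : ℕ) + 2 ^ (mm - (k - 1)) * (p.1 : ℕ))
    (s : Fin (2 ^ mm)) (X : Fin (2 ^ mm) → ℝ)
    (hX : X = fun t => if t = s then (1 : ℝ) else 0)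
    (r : Ω → Fin (2 ^ (mm - (k - 1)))) (hr : Measurable r)
    (hrunif : ∀ r₀, volume {ω | r ω = r₀} = (((2 ^ (mm - (k - 1)) : ℕ) : ℝ≥0∞))⁻¹)
    (Qt : Ω → Fin (2 ^ (k - 1)) → ℝ)
    (hQmeas : ∀ l, Measurable fun ω => Qt ω l)
    (hQint : ∀ l, Integrable fun ω => Qt ω l)
    (hQcond : ∀ (r₀ : Fin (2 ^ (mm - (k - 1)))) (l : Fin (2 ^ (k - 1))),
      (∫ ω, (if r ω = r₀ then Qt ω l else 0))
        = ((Real.exp ε - 1) / (Real.exp ε + 2 ^ k - 1)) *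
            (∑ t, Hadamard (mm - (k - 1)) r₀ t * X (e (l, t))) / (2 ^ (mm - (k - 1)) : ℕ))
    (Yhat : Ω → Fin (2 ^ mm) → ℝ)
    (hYhat : ∀ ω j', Yhat ω j' =
      if (e.symm j').2 = r ω then
        (1 / (2 ^ (k - 1) : ℝ)) * ((Real.exp ε + 2 ^ k - 1) / (Real.exp ε - 1)) *
          ∑ l, Hadamard (k - 1) (e.symm j').1 l * Qt ω l
      else 0) :
    ∀ j' : Fin (2 ^ mm),
      (∫ ω, Yhat ω j') = (1 / (2 ^ mm : ℝ)) * ∑ t, Hadamard mm j' t * X t :=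
  rhr_estimator_unbiased_general mm k hkm ε hε e he X r hr Qt hQint hQcond Yhat hYhat
end
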